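/- Proposition (equality of SRI and symmetrized reference-invariant GE in the limits): the limit as α tends to 1 (with α ≠ 0, 1) of α·SR_α(p̄, q̄) equals the limit as α tends to 1 of α·SD_α(p̄, q̄), and both equal (1/2)·Σ_j p̄_j (r̄_j − 1) ln r̄_j; the same common limit holds as α tends to 0 for the rescalings (1−α)·SR_α and (1−α)·SD_α. Here p̄_j = p_j/Σ_k p_k, q̄_j = q_j/Σ_k q_k, and r̄_j = q̄_j/p̄_j. -/

import Mathlib

/-
Put `A(α) = Σ_j p̄_j r̄_j^α`, so that `A(0) = Σ_j p̄_j = 1` and `A(1) = Σ_j q̄_j = 1`. Then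
`α·SR_α` and `α·SD_α` are half the difference quotients at `α = 1` of `log (A(1-α)·A(α))` and of
`A(1-α) + A(α)`; because `A(0) = A(1) = 1`, these two functions have the same derivative
`A'(1) - A'(0) = Σ_j p̄_j (r̄_j - 1) log r̄_j` at `1`. Both indices are invariant under
`α ↦ 1 - α`, which turns the limits at `0` into those at `1`.
-/
/-- Symmetrized Rényi index on the normalized distributions
`p̄_j = p_j/Σ p`, `q̄_j = q_j/Σ q`, `r̄_j = q̄_j/p̄_j`:
`SR_α(p̄,q̄) = −(1/(2α(1−α)))·ln[(Σ_j p̄_j r̄_j^{1−α})·(Σ_j p̄_j r̄_j^{α})]`. -/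
noncomputable def symRenyiBar (m : ℕ) (α : ℝ) (p q : Fin m → ℝ) : ℝ :=
  -(1 / (2 * α * (1 - α))) *
    Real.log
      ((∑ j, (p j / ∑ k, p k) * ((q j / ∑ k, q k) / (p j / ∑ k, p k)) ^ (1 - α)) *
       (∑ j, (p j / ∑ k, p k) * ((q j / ∑ k, q k) / (p j / ∑ k, p k)) ^ α))

/-- Symmetrized reference-invariant GE index on the normalized distributions:
`SD_α(p̄,q̄) = (1/(α(1−α))) · [1 − (1/2) Σ_j p̄_j (r̄_j^{1−α} + r̄_j^{α})]`. -/
noncomputable def symGEBar (m : ℕ) (α : ℝ) (p q : Fin m → ℝ) : ℝ :=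
  (1 / (α * (1 - α))) *
    (1 - (1 / 2) * ∑ j, (p j / ∑ k, p k) *
      (((q j / ∑ k, q k) / (p j / ∑ k, p k)) ^ (1 - α) +
       ((q j / ∑ k, q k) / (p j / ∑ k, p k)) ^ α))

open Real Filter Finset Topology

namespace SymIndex

variable {ι : Type*} [Fintype ι] {w r : ι → ℝ}

noncomputable def powSum (w r : ι → ℝ) (α : ℝ) : ℝ := ∑ j, w j * r j ^ α

noncomputable def symRenyi (w r : ι → ℝ) (α : ℝ) : ℝ :=
  -(1 / (2 * α * (1 - α))) * log (powSum w r (1 - α) * powSum w r α)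

noncomputable def symGE (w r : ι → ℝ) (α : ℝ) : ℝ :=
  (1 / (α * (1 - α))) * (1 - (1 / 2) * (powSum w r (1 - α) + powSum w r α))

lemma powSum_zero : powSum w r 0 = ∑ j, w j := by
  simp [powSum]

lemma powSum_one : powSum w r 1 = ∑ j, w j * r j := by
  simp [powSum]

lemma hasDerivAt_powSum (hr : ∀ j, 0 < r j) (α : ℝ) :
    HasDerivAt (powSum w r) (∑ j, w j * (r j ^ α * log (r j))) α :=
  HasDerivAt.fun_sum fun j _ => (hasStrictDerivAt_const_rpow (hr j) α).hasDerivAt.const_mul (w j)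

lemma hasDerivAt_powSum_one_sub_at_one (hr : ∀ j, 0 < r j) :
    HasDerivAt (fun α => powSum w r (1 - α)) (-∑ j, w j * log (r j)) 1 := by
  have h := (hasDerivAt_powSum (w := w) hr (1 - 1)).comp (1 : ℝ) ((hasDerivAt_id 1).const_sub 1)
  simpa [Function.comp_def] using h

lemma hasDerivAt_powSum_at_one (hr : ∀ j, 0 < r j) :
    HasDerivAt (powSum w r) (∑ j, w j * (r j * log (r j))) 1 := by
  simpa using hasDerivAt_powSum (w := w) hr 1

lemma neg_sum_log_add_sum_mul_log :
    -∑ j, w j * log (r j) + ∑ j, w j * (r j * log (r j)) = ∑ j, w j * (r j - 1) * log (r j) := by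
  rw [← sum_neg_distrib, ← sum_add_distrib]
  exact sum_congr rfl fun j _ => by ring

lemma hasDerivAt_powSum_one_sub_add_powSum (hr : ∀ j, 0 < r j) :
    HasDerivAt (fun α => powSum w r (1 - α) + powSum w r α)
      (∑ j, w j * (r j - 1) * log (r j)) 1 := by
  rw [← neg_sum_log_add_sum_mul_log]
  exact (hasDerivAt_powSum_one_sub_at_one hr).add (hasDerivAt_powSum_at_one hr)

lemma hasDerivAt_log_powSum_one_sub_mul_powSum (hr : ∀ j, 0 < r j) (hw : ∑ j, w j = 1)
    (hwr : ∑ j, w j * r j = 1) :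
    HasDerivAt (fun α => log (powSum w r (1 - α) * powSum w r α))
      (∑ j, w j * (r j - 1) * log (r j)) 1 := by
  have hA : powSum w r 0 = 1 := by rw [powSum_zero, hw]
  have hB : powSum w r 1 = 1 := by rw [powSum_one, hwr]
  rw [← neg_sum_log_add_sum_mul_log]
  have h := ((hasDerivAt_powSum_one_sub_at_one (w := w) hr).mul
    (hasDerivAt_powSum_at_one (w := w) hr)).log (by simp [hA, hB])
  simpa [hA, hB] using h

lemma tendsto_mul_symRenyi_nhdsNE_one (hr : ∀ j, 0 < r j) (hw : ∑ j, w j = 1)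
    (hwr : ∑ j, w j * r j = 1) :
    Tendsto (fun α => α * symRenyi w r α) (𝓝[≠] 1)
      (𝓝 ((1 / 2) * ∑ j, w j * (r j - 1) * log (r j))) := by
  have hF1 : log (powSum w r (1 - 1) * powSum w r 1) = 0 := by
    rw [sub_self, powSum_zero, powSum_one, hw, hwr, mul_one, log_one]
  refine ((hasDerivAt_log_powSum_one_sub_mul_powSum hr hw hwr).tendsto_slope.const_mul _).congr' ?_
  filter_upwards [self_mem_nhdsWithin, (eventually_ne_nhds one_ne_zero).filter_mono
    nhdsWithin_le_nhds] with α (hα1 : α ≠ 1) hα0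
  have : 1 - α ≠ 0 := sub_ne_zero.mpr hα1.symm
  have : α - 1 ≠ 0 := sub_ne_zero.mpr hα1
  rw [slope_def_field, hF1, symRenyi]
  field_simp
  ring

lemma tendsto_mul_symGE_nhdsNE_one (hr : ∀ j, 0 < r j) (hw : ∑ j, w j = 1)
    (hwr : ∑ j, w j * r j = 1) :
    Tendsto (fun α => α * symGE w r α) (𝓝[≠] 1)
      (𝓝 ((1 / 2) * ∑ j, w j * (r j - 1) * log (r j))) := by
  have hS1 : powSum w r (1 - 1) + powSum w r 1 = 2 := by
    rw [sub_self, powSum_zero, powSum_one, hw, hwr]; norm_num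
  refine ((hasDerivAt_powSum_one_sub_add_powSum hr).tendsto_slope.const_mul _).congr' ?_
  filter_upwards [self_mem_nhdsWithin, (eventually_ne_nhds one_ne_zero).filter_mono
    nhdsWithin_le_nhds] with α (hα1 : α ≠ 1) hα0
  have : 1 - α ≠ 0 := sub_ne_zero.mpr hα1.symm
  have : α - 1 ≠ 0 := sub_ne_zero.mpr hα1
  rw [slope_def_field, hS1, symGE]
  field_simp
  ring

lemma symRenyi_one_sub (α : ℝ) : symRenyi w r (1 - α) = symRenyi w r α := by
  rw [symRenyi, symRenyi, sub_sub_cancel, mul_comm (powSum w r α)]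
  ring

lemma symGE_one_sub (α : ℝ) : symGE w r (1 - α) = symGE w r α := by
  rw [symGE, symGE, sub_sub_cancel, add_comm (powSum w r α)]
  ring

end SymIndex

lemma tendsto_one_sub_nhdsNE_zero : Tendsto (fun α : ℝ => 1 - α) (𝓝[≠] 0) (𝓝[≠] 1) :=
  tendsto_nhdsWithin_iff.mpr
    ⟨((continuous_const.sub continuous_id).tendsto' 0 1 (sub_zero 1)).mono_left
      nhdsWithin_le_nhds,
     eventually_nhdsWithin_of_forall fun α (hα : α ≠ 0) => by simpa using hα⟩

lemma tendsto_one_sub_mul_nhdsNE_zero_of_symm {f : ℝ → ℝ} {l : ℝ}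
    (hf : ∀ α, f (1 - α) = f α) (h : Tendsto (fun α => α * f α) (𝓝[≠] 1) (𝓝 l)) :
    Tendsto (fun α => (1 - α) * f α) (𝓝[≠] 0) (𝓝 l) := by
  simpa only [Function.comp_def, hf] using h.comp tendsto_one_sub_nhdsNE_zero

lemma sum_div_sum_self {ι : Type*} [Fintype ι] [Nonempty ι] {p : ι → ℝ} (hp : ∀ j, 0 < p j) :
    ∑ j, p j / ∑ k, p k = 1 := by
  rw [← sum_div, div_self (sum_pos (fun j _ => hp j) univ_nonempty).ne']

lemma symRenyiBar_eq_symRenyi (m : ℕ) (α : ℝ) (p q : Fin m → ℝ) :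
    symRenyiBar m α p q = SymIndex.symRenyi (fun j => p j / ∑ k, p k)
      (fun j => (q j / ∑ k, q k) / (p j / ∑ k, p k)) α :=
  rfl

lemma symGEBar_eq_symGE (m : ℕ) (α : ℝ) (p q : Fin m → ℝ) :
    symGEBar m α p q = SymIndex.symGE (fun j => p j / ∑ k, p k)
      (fun j => (q j / ∑ k, q k) / (p j / ∑ k, p k)) α := by
  simp only [symGEBar, SymIndex.symGE, SymIndex.powSum, ← sum_add_distrib, mul_add]

/-- Equality of the SRI and the symmetrized reference-invariant GE in the
limits: as `α → 1` (with `α ≠ 0, 1`), both `α·SR_α(p̄,q̄)` and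
`α·SD_α(p̄,q̄)` tend to `(1/2)·Σ_j p̄_j (r̄_j − 1) ln r̄_j`; as `α → 0`, both
`(1−α)·SR_α(p̄,q̄)` and `(1−α)·SD_α(p̄,q̄)` tend to the same quantity. -/
theorem symRenyiBar_symGEBar_tendsto (m : ℕ) (hm : 1 ≤ m) (p q : Fin m → ℝ)
    (hp : ∀ j, 0 < p j) (hq : ∀ j, 0 < q j) :
    Filter.Tendsto (fun α : ℝ => α * symRenyiBar m α p q)
        (nhdsWithin 1 {α : ℝ | α ≠ 0 ∧ α ≠ 1})
        (nhds ((1 / 2) * ∑ j, (p j / ∑ k, p k) *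
          (((q j / ∑ k, q k) / (p j / ∑ k, p k)) - 1) *
          Real.log ((q j / ∑ k, q k) / (p j / ∑ k, p k)))) ∧
      Filter.Tendsto (fun α : ℝ => α * symGEBar m α p q)
        (nhdsWithin 1 {α : ℝ | α ≠ 0 ∧ α ≠ 1})
        (nhds ((1 / 2) * ∑ j, (p j / ∑ k, p k) *
          (((q j / ∑ k, q k) / (p j / ∑ k, p k)) - 1) *
          Real.log ((q j / ∑ k, q k) / (p j / ∑ k, p k)))) ∧
      Filter.Tendsto (fun α : ℝ => (1 - α) * symRenyiBar m α p q)
        (nhdsWithin 0 {α : ℝ | α ≠ 0 ∧ α ≠ 1})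
        (nhds ((1 / 2) * ∑ j, (p j / ∑ k, p k) *
          (((q j / ∑ k, q k) / (p j / ∑ k, p k)) - 1) *
          Real.log ((q j / ∑ k, q k) / (p j / ∑ k, p k)))) ∧
      Filter.Tendsto (fun α : ℝ => (1 - α) * symGEBar m α p q)
        (nhdsWithin 0 {α : ℝ | α ≠ 0 ∧ α ≠ 1})
        (nhds ((1 / 2) * ∑ j, (p j / ∑ k, p k) *
          (((q j / ∑ k, q k) / (p j / ∑ k, p k)) - 1) *
          Real.log ((q j / ∑ k, q k) / (p j / ∑ k, p k)))) := by
  have : Nonempty (Fin m) := Fin.pos_iff_nonempty.mp hm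
  have hP : 0 < ∑ k, p k := sum_pos (fun k _ => hp k) univ_nonempty
  have hQ : 0 < ∑ k, q k := sum_pos (fun k _ => hq k) univ_nonempty
  have hr : ∀ j, 0 < (q j / ∑ k, q k) / (p j / ∑ k, p k) := fun j =>
    div_pos (div_pos (hq j) hQ) (div_pos (hp j) hP)
  have hwr : ∑ j, (p j / ∑ k, p k) * ((q j / ∑ k, q k) / (p j / ∑ k, p k)) = 1 := by
    simp_rw [mul_div_cancel₀ _ (div_pos (hp _) hP).ne']
    exact sum_div_sum_self hq
  have hR := SymIndex.tendsto_mul_symRenyi_nhdsNE_one hr (sum_div_sum_self hp) hwr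
  have hG := SymIndex.tendsto_mul_symGE_nhdsNE_one hr (sum_div_sum_self hp) hwr
  have h1 : 𝓝[{α : ℝ | α ≠ 0 ∧ α ≠ 1}] 1 ≤ 𝓝[≠] 1 := nhdsWithin_mono _ fun _ h => h.2
  have h0 : 𝓝[{α : ℝ | α ≠ 0 ∧ α ≠ 1}] 0 ≤ 𝓝[≠] 0 := nhdsWithin_mono _ fun _ h => h.1
  simp only [symRenyiBar_eq_symRenyi, symGEBar_eq_symGE]
  exact ⟨hR.mono_left h1, hG.mono_left h1,
    (tendsto_one_sub_mul_nhdsNE_zero_of_symm SymIndex.symRenyi_one_sub hR).mono_left h0,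
    (tendsto_one_sub_mul_nhdsNE_zero_of_symm SymIndex.symGE_one_sub hG).mono_left h0⟩
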